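/- For each vertex x of a one-ended levelled tree Γ there is a family of polynomials P_{x,t}(z), t ∈ Γ_x ∪ {x'}, with real coefficients and positive leading coefficients, such that the function v_x(t) = P_{x,t}(z) satisfies the eigenvalue equation (Jv_x)(t) = z v_x(t) for all t ∈ Γ_x; moreover P_{x,x} equals the least common multiple of the polynomials {P_{y,x} : y ∈ N_x}, and for t ∈ Γ_y ∪ {x} with y ∈ N_x one has P_{x,t}(z) = P_{x,x}(z) · P_{y,t}(z)/P_{y,x}(z). -/
import Mathlib


/-- A one-ended levelled tree: every vertex `x` has a unique upward neighbor
`parent x` (written `x'`) one level up, and a finite set `children x` of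
downward neighbors one level down; the tree is connected with one end. -/
structure JTree where
  V : Type
  parent : V → V
  level : V → ℕ
  level_parent : ∀ x, level (parent x) = level x + 1
  children : V → Finset V
  mem_children : ∀ x y : V, y ∈ children x ↔ parent y = x
  connected : ∀ x y : V, ∃ k l : ℕ, parent^[k] x = parent^[l] y
  subtree_finite : ∀ x : V, {t : V | ∃ k : ℕ, parent^[k] t = x}.Finite

namespace JTree

variable (T : JTree)

/-- `T.descend t x` means `t` belongs to the finite subtree `Γ_x` below (and
including) the vertex `x`. -/
def descend (t x : T.V) : Prop := ∃ k : ℕ, T.parent^[k] t = x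

/-- The Jacobi operator on the tree:
`(Jv)(x) = λ_x v(x') + β_x v(x) + Σ_{y ∈ N_x} λ_y v(y)`. -/
noncomputable def jacobi (lam beta : T.V → ℝ) (v : T.V → ℂ) (x : T.V) : ℂ :=
  (lam x : ℂ) * v (T.parent x) + (beta x : ℂ) * v x +
    ∑ y ∈ T.children x, (lam y : ℂ) * v y

lemma level_iterate (k : ℕ) (t : T.V) : T.level (T.parent^[k] t) = T.level t + k := by
  induction k with
  | zero => simp
  | succ k ih => rw [Function.iterate_succ_apply', T.level_parent, ih]; omega

lemma descend_level {t x : T.V} (h : T.descend t x) : T.level t ≤ T.level x := by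
  obtain ⟨k, hk⟩ := h
  have := T.level_iterate k t
  rw [hk] at this; omega

lemma ne_parent (x : T.V) : x ≠ T.parent x := by
  intro h
  have := T.level_parent x
  rw [← h] at this; omega

lemma descend_refl (x : T.V) : T.descend x x := ⟨0, rfl⟩

lemma children_level {x y : T.V} (hy : y ∈ T.children x) : T.level y + 1 = T.level x := by
  rw [← (T.mem_children x y).mp hy, T.level_parent]

lemma descend_unique {x y y' t : T.V} (hy : y ∈ T.children x) (hy' : y' ∈ T.children x)
    (h : T.descend t y) (h' : T.descend t y') : y = y' := by
  obtain ⟨k, hk⟩ := h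
  obtain ⟨l, hl⟩ := h'
  have h1 := T.level_iterate k t
  have h2 := T.level_iterate l t
  rw [hk] at h1; rw [hl] at h2
  have h3 := T.children_level hy
  have h4 := T.children_level hy'
  have : k = l := by omega
  rw [← hk, ← hl, this]

lemma descend_cases {t x : T.V} (h : T.descend t x) :
    t = x ∨ ∃ y, y ∈ T.children x ∧ T.descend t y := by
  obtain ⟨k, hk⟩ := h
  cases k with
  | zero => exact Or.inl hk
  | succ k =>
    refine Or.inr ⟨T.parent^[k] t, ?_, ⟨k, rfl⟩⟩
    rw [T.mem_children, ← Function.iterate_succ_apply' T.parent k t, hk]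

lemma descend_parent {t y : T.V} (h : T.descend t y) (hne : t ≠ y) :
    T.descend (T.parent t) y := by
  obtain ⟨k, hk⟩ := h
  cases k with
  | zero => exact absurd hk hne
  | succ k => exact ⟨k, by rw [← Function.iterate_succ_apply T.parent k t, hk]⟩

lemma descend_of_child {s t y : T.V} (hs : s ∈ T.children t) (h : T.descend t y) :
    T.descend s y := by
  obtain ⟨k, hk⟩ := h
  exact ⟨k + 1, by rw [Function.iterate_succ_apply, (T.mem_children t s).mp hs, hk]⟩

lemma desc_ne {x y t : T.V} (hy : y ∈ T.children x) (ht : T.descend t y) :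
    t ≠ x ∧ t ≠ T.parent x := by
  have h1 := T.descend_level ht
  have h2 := T.children_level hy
  have h3 := T.level_parent x
  constructor <;> intro h <;> rw [h] at h1 <;> omega

open Polynomial in
open scoped Classical in
noncomputable def aux (lam beta : T.V → ℝ) : ℕ → T.V → T.V → Polynomial ℝ
  | 0, _, _ => 0
  | (n+1), x, t =>
    if t = T.parent x then
      C (lam x)⁻¹ *
        ((X - C (beta x)) * ((T.children x).lcm fun y => aux lam beta n y x) -
          ∑ y ∈ T.children x, C (lam y) *
            (((T.children x).lcm fun z => aux lam beta n z x) / aux lam beta n y x *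
              aux lam beta n y y))
    else if t = x then (T.children x).lcm fun y => aux lam beta n y x
    else if h : ∃ y, y ∈ T.children x ∧ T.descend t y then
      ((T.children x).lcm fun y => aux lam beta n y x) / aux lam beta n h.choose x *
        aux lam beta n h.choose t
    else 0

noncomputable def P (lam beta : T.V → ℝ) (x t : T.V) : Polynomial ℝ :=
  aux T lam beta (T.level x + 1) x t

variable (lam beta : T.V → ℝ)

lemma aux_child {x y : T.V} (hy : y ∈ T.children x) :
    aux T lam beta (T.level x) y = P T lam beta y := by
  rw [← T.children_level hy]; rfl

lemma lcm_aux (x : T.V) :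
    ((T.children x).lcm fun y => aux T lam beta (T.level x) y x) =
      (T.children x).lcm fun y => P T lam beta y x := by
  apply Finset.lcm_congr rfl
  intro y hy
  rw [aux_child T lam beta hy]

lemma P_self (x : T.V) :
    P T lam beta x x = (T.children x).lcm fun y => P T lam beta y x := by
  rw [P]
  show aux T lam beta (T.level x + 1) x x = _
  rw [aux, if_neg (T.ne_parent x), if_pos rfl]
  exact lcm_aux T lam beta x

lemma P_desc {x y t : T.V} (hy : y ∈ T.children x) (ht : T.descend t y) :
    P T lam beta x t = P T lam beta x x / P T lam beta y x * P T lam beta y t := by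
  obtain ⟨hne1, hne2⟩ := T.desc_ne hy ht
  have hex : ∃ y', y' ∈ T.children x ∧ T.descend t y' := ⟨y, hy, ht⟩
  rw [P]
  show aux T lam beta (T.level x + 1) x t = _
  rw [aux, if_neg hne2, if_neg hne1, dif_pos hex]
  have hc := hex.choose_spec
  have hcy : hex.choose = y := T.descend_unique hc.1 hy hc.2 ht
  rw [hcy, aux_child T lam beta hy, lcm_aux, P_self]

lemma P_parent (x : T.V) :
    P T lam beta x (T.parent x) = Polynomial.C (lam x)⁻¹ *
      ((Polynomial.X - Polynomial.C (beta x)) * P T lam beta x x -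
        ∑ y ∈ T.children x, Polynomial.C (lam y) * P T lam beta x y) := by
  rw [P]
  show aux T lam beta (T.level x + 1) x (T.parent x) = _
  rw [aux, if_pos rfl, lcm_aux, ← P_self]
  congr 1
  congr 1
  refine Finset.sum_congr rfl fun y hy => ?_
  rw [aux_child T lam beta hy, P_desc T lam beta hy (T.descend_refl y)]

end JTree

section Main

open Polynomial JTree

variable (T : JTree) (lam beta : T.V → ℝ) (hlam : ∀ t, 0 < lam t)

/-- The main induction package. -/
def Good (x : T.V) : Prop :=
  (∀ t, (T.descend t x ∨ t = T.parent x) → 0 < (P T lam beta x t).leadingCoeff) ∧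
  (∀ t, T.descend t x →
    X * P T lam beta x t =
      C (lam t) * P T lam beta x (T.parent t) + C (beta t) * P T lam beta x t +
        ∑ y ∈ T.children t, C (lam y) * P T lam beta x y) ∧
  ((P T lam beta x x).natDegree + 1 = (P T lam beta x (T.parent x)).natDegree)

include hlam in
theorem good_all : ∀ x : T.V, Good T lam beta x := by
  classical
  suffices H : ∀ n (x : T.V), T.level x = n → Good T lam beta x by
    intro x; exact H _ x rfl
  intro n
  induction n using Nat.strong_induction_on with
  | _ n ih =>
  intro x hx
  -- facts about children
  have IH : ∀ y ∈ T.children x, Good T lam beta y := by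
    intro y hy
    have := T.children_level hy
    exact ih (T.level y) (by omega) y rfl
  have hynz : ∀ y ∈ T.children x, P T lam beta y x ≠ 0 := by
    intro y hy
    have h1 := (IH y hy).1 x (Or.inr ((T.mem_children x y).mp hy).symm)
    intro h; rw [h] at h1; simp at h1
  have hLnz : P T lam beta x x ≠ 0 := by
    rw [P_self]
    rw [Ne, Finset.lcm_eq_zero_iff]
    rintro ⟨y, hy, h⟩
    exact hynz y hy h
  have hLmonic : (P T lam beta x x).Monic := by
    have h1 : normalize (P T lam beta x x) = P T lam beta x x := by
      rw [P_self]; exact Finset.normalize_lcm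
    rw [← h1]
    exact Polynomial.monic_normalize hLnz
  have hdvd : ∀ y ∈ T.children x, P T lam beta y x ∣ P T lam beta x x := by
    intro y hy; rw [P_self]; exact Finset.dvd_lcm hy
  have hmul : ∀ y ∈ T.children x,
      P T lam beta y x * (P T lam beta x x / P T lam beta y x) = P T lam beta x x :=
    fun y hy => EuclideanDomain.mul_div_cancel' (hynz y hy) (hdvd y hy)
  have hQpos : ∀ y ∈ T.children x, 0 < (P T lam beta x x / P T lam beta y x).leadingCoeff := by
    intro y hy
    have h1 := congrArg leadingCoeff (hmul y hy)
    rw [leadingCoeff_mul, hLmonic.leadingCoeff] at h1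
    have h2 := (IH y hy).1 x (Or.inr ((T.mem_children x y).mp hy).symm)
    nlinarith
  -- degree of P x y for children y
  have hdegy : ∀ y ∈ T.children x,
      (P T lam beta x y).natDegree + 1 = (P T lam beta x x).natDegree := by
    intro y hy
    have hpar : T.parent y = x := (T.mem_children x y).mp hy
    have hE := (IH y hy).2.2
    rw [hpar] at hE
    have hQnz : P T lam beta x x / P T lam beta y x ≠ 0 := by
      intro h
      have := hQpos y hy; rw [h] at this; simp at this
    have hyynz : P T lam beta y y ≠ 0 := by
      have h1 := (IH y hy).1 y (Or.inl (T.descend_refl y))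
      intro h; rw [h] at h1; simp at h1
    have h1 := congrArg natDegree (hmul y hy)
    rw [natDegree_mul (hynz y hy) hQnz] at h1
    rw [P_desc T lam beta hy (T.descend_refl y),
      natDegree_mul hQnz hyynz]
    omega
  -- the sum has degree at most natDegree (P x x)
  set D := (P T lam beta x x).natDegree with hD
  have hSdeg : (∑ y ∈ T.children x, C (lam y) * P T lam beta x y).natDegree ≤ D := by
    apply natDegree_sum_le_of_forall_le
    intro y hy
    rw [natDegree_C_mul (ne_of_gt (hlam y))]
    have := hdegy y hy
    omega
  have hXp : ((X - C (beta x)) * P T lam beta x x).Monic :=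
    (monic_X_sub_C (beta x)).mul hLmonic
  have hXpdeg : ((X - C (beta x)) * P T lam beta x x).natDegree = D + 1 := by
    rw [natDegree_mul (X_sub_C_ne_zero (beta x)) hLnz, natDegree_X_sub_C]
    omega
  have hqMonic : ((X - C (beta x)) * P T lam beta x x -
      ∑ y ∈ T.children x, C (lam y) * P T lam beta x y).Monic := by
    apply hXp.sub_of_left
    apply Polynomial.degree_lt_degree
    rw [hXpdeg]; omega
  have hqdeg : ((X - C (beta x)) * P T lam beta x x -
      ∑ y ∈ T.children x, C (lam y) * P T lam beta x y).natDegree = D + 1 := by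
    rw [natDegree_sub_eq_left_of_natDegree_lt, hXpdeg]
    rw [hXpdeg]; omega
  -- positivity
  refine ⟨?_, ?_, ?_⟩
  · intro t ht
    rcases ht with ht | ht
    · rcases T.descend_cases ht with rfl | ⟨y, hy, hty⟩
      · rw [hLmonic.leadingCoeff]; norm_num
      · rw [P_desc T lam beta hy hty, leadingCoeff_mul]
        exact mul_pos (hQpos y hy) ((IH y hy).1 t (Or.inl hty))
    · rw [ht, P_parent, leadingCoeff_mul, leadingCoeff_C, hqMonic.leadingCoeff]
      have := hlam x
      positivity
  · intro t ht
    rcases T.descend_cases ht with h | ⟨y, hy, hty⟩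
    · subst h
      rw [P_parent]
      have hc : C (lam t) * C (lam t)⁻¹ = (1 : Polynomial ℝ) := by
        rw [← C_mul, mul_inv_cancel₀ (ne_of_gt (hlam t)), C_1]
      linear_combination (-((Polynomial.X - Polynomial.C (beta t)) * P T lam beta t t -
        ∑ y ∈ T.children t, C (lam y) * P T lam beta t y)) * hc
    · -- t in the subtree of a child y
      have hpar : T.parent y = x := (T.mem_children x y).mp hy
      have heq := (IH y hy).2.1 t hty
      have h1 : P T lam beta x t = P T lam beta x x / P T lam beta y x * P T lam beta y t :=
        P_desc T lam beta hy hty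
      have h2 : P T lam beta x (T.parent t) =
          P T lam beta x x / P T lam beta y x * P T lam beta y (T.parent t) := by
        by_cases hty' : t = y
        · rw [hty', hpar]
          linear_combination -(hmul y hy)
        · exact P_desc T lam beta hy (T.descend_parent hty hty')
      have h3 : ∀ s ∈ T.children t, P T lam beta x s =
          P T lam beta x x / P T lam beta y x * P T lam beta y s :=
        fun s hs => P_desc T lam beta hy (T.descend_of_child hs hty)
      set Q := P T lam beta x x / P T lam beta y x with hQ
      rw [h1, h2, Finset.sum_congr rfl fun s hs => by rw [h3 s hs]]
      calc X * (Q * P T lam beta y t) = Q * (X * P T lam beta y t) := by ring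
        _ = Q * (C (lam t) * P T lam beta y (T.parent t) + C (beta t) * P T lam beta y t +
              ∑ s ∈ T.children t, C (lam s) * P T lam beta y s) := by rw [heq]
        _ = _ := by
            rw [mul_add, mul_add, Finset.mul_sum]
            rw [Finset.sum_congr rfl fun s _ =>
              show Q * (C (lam s) * P T lam beta y s) = C (lam s) * (Q * P T lam beta y s) by ring]
            ring
  · rw [P_parent, natDegree_C_mul (inv_ne_zero (ne_of_gt (hlam x))), hqdeg]

end Main


/-- For each vertex `x` there is a family of real polynomials `P x t`, `t ∈ Γ_x ∪ {x'}`,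
with positive leading coefficients, such that `t ↦ (P x t)(z)` satisfies the eigenvalue
equation on `Γ_x` (as a polynomial identity); moreover `P x x` is the least common
multiple of `{P y x : y ∈ N_x}` and for `y ∈ N_x`, `t ∈ Γ_y ∪ {x}` one has
`P x t = P x x · P y t / P y x` (stated without division). -/
theorem stmt_12 (T : JTree) (lam beta : T.V → ℝ) (hlam : ∀ t, 0 < lam t) :
    ∃ P : T.V → T.V → Polynomial ℝ,
      ∀ x : T.V,
        (∀ t, (T.descend t x ∨ t = T.parent x) → 0 < (P x t).leadingCoeff) ∧
        (∀ t, T.descend t x →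
          Polynomial.X * P x t =
            Polynomial.C (lam t) * P x (T.parent t) + Polynomial.C (beta t) * P x t +
              ∑ y ∈ T.children t, Polynomial.C (lam y) * P x y) ∧
        (P x x = (T.children x).lcm fun y => P y x) ∧
        (∀ y ∈ T.children x, ∀ t, (T.descend t y ∨ t = x) →
          P x t * P y x = P x x * P y t) := by

  refine ⟨JTree.P T lam beta, fun x => ?_⟩
  obtain ⟨h1, h2, _⟩ := good_all T lam beta hlam x
  refine ⟨h1, h2, JTree.P_self T lam beta x, ?_⟩
  intro y hy t ht
  have hynz : JTree.P T lam beta y x ≠ 0 := by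
    have h := (good_all T lam beta hlam y).1 x
      (Or.inr ((T.mem_children x y).mp hy).symm)
    intro hh; rw [hh] at h; simp at h
  have hdvd : JTree.P T lam beta y x ∣ JTree.P T lam beta x x := by
    rw [JTree.P_self]; exact Finset.dvd_lcm hy
  have hmul : JTree.P T lam beta y x *
      (JTree.P T lam beta x x / JTree.P T lam beta y x) = JTree.P T lam beta x x :=
    EuclideanDomain.mul_div_cancel' hynz hdvd
  rcases ht with ht | rfl
  · rw [JTree.P_desc T lam beta hy ht]
    linear_combination (JTree.P T lam beta y t) * hmul
  · rfl
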